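/- arXiv:1607.03645 — 2 statements merged into one kernel-verified Lean document; each statement's English description precedes it below -/
import Mathlib

section
/- Let P be an n×n real matrix with ⟨Px,x⟩ ≥ ⟨x,x⟩ for all x ∈ ℝⁿ, and set A_t = t^P = exp((log t)P) for t > 0. Then for every nonzero x ∈ ℝⁿ, the function t ↦ |A_t x| is strictly increasing on (0,∞). -/
open MeasureTheory Real Set Matrix
open scoped FourierTransform ENNReal NNReal RealInnerProductSpace

noncomputable section

abbrev Euc (n : ℕ) := EuclideanSpace ℝ (Fin n)

variable {n : ℕ}

/-- Action of a matrix on Euclidean space. -/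
def mulVecEuc (P : Matrix (Fin n) (Fin n) ℝ) (x : Euc n) : Euc n :=
  (EuclideanSpace.equiv (Fin n) ℝ).symm (P.mulVec (EuclideanSpace.equiv (Fin n) ℝ x))

/-- The parabolic dilation `A_t = exp((log t) P)` acting on `ℝⁿ`. -/
def Aact (P : Matrix (Fin n) (Fin n) ℝ) (t : ℝ) (x : Euc n) : Euc n :=
  mulVecEuc (NormedSpace.exp ((Real.log t) • P)) x

/-- The hypothesis `⟨Px, x⟩ ≥ ⟨x, x⟩`. -/
def GoodMatrix (P : Matrix (Fin n) (Fin n) ℝ) : Prop :=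
  ∀ x : Euc n, ⟪x, x⟫ ≤ ⟪mulVecEuc P x, x⟫

/-- `ρ` is the norm function associated with the dilations `A_t`:
`ρ 0 = 0` and for `x ≠ 0`, `ρ x` is positive with `|A_{(ρ x)⁻¹} x| = 1`. -/
def IsRho (P : Matrix (Fin n) (Fin n) ℝ) (ρ : Euc n → ℝ) : Prop :=
  ρ 0 = 0 ∧ ∀ x : Euc n, x ≠ 0 → 0 < ρ x ∧ ‖Aact P (ρ x)⁻¹ x‖ = 1

/-- Non-isotropic dilate `φ_t(x) = t^{-γ} φ(A_t^{-1} x)`, `γ = trace P`. -/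
def dil (P : Matrix (Fin n) (Fin n) ℝ) (φ : Euc n → ℂ) (t : ℝ) (x : Euc n) : ℂ :=
  (t ^ (-(P.trace)) : ℝ) • φ (Aact P t⁻¹ x)

/-- Convolution. -/
def conv (f g : Euc n → ℂ) (x : Euc n) : ℂ := ∫ y, f y * g (x - y)

/-- Peetre maximal function relative to `ρ`. -/
def peetre {E : Type*} [NormedAddCommGroup E] (ρ : Euc n → ℝ) (N R : ℝ)
    (F : Euc n → E) (x : Euc n) : ℝ≥0∞ :=
  ⨆ y : Euc n, (‖F (x - y)‖₊ : ℝ≥0∞) / ENNReal.ofReal ((1 + R * ρ y) ^ N)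

/-- Hardy–Littlewood maximal operator relative to the `ρ`-balls. -/
def maxρ {E : Type*} [NormedAddCommGroup E] (ρ : Euc n → ℝ) (f : Euc n → E)
    (x : Euc n) : ℝ≥0∞ :=
  ⨆ (c : Euc n) (r : ℝ) (_ : 0 < r) (_ : ρ (x - c) < r),
    (volume {y : Euc n | ρ (c - y) < r})⁻¹ * ∫⁻ y in {y : Euc n | ρ (c - y) < r}, ‖f y‖₊

/-- Muckenhoupt `A_p` class relative to `ρ`-balls. -/
def IsAp (ρ : Euc n → ℝ) (w : Euc n → ℝ) (p : ℝ) : Prop :=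
  ∃ C : ℝ≥0, ∀ (c : Euc n) (r : ℝ), 0 < r →
    (∫⁻ y in {y : Euc n | ρ (c - y) < r}, ENNReal.ofReal (w y)) *
      (∫⁻ y in {y : Euc n | ρ (c - y) < r}, ENNReal.ofReal (w y ^ (-(1 / (p - 1)))))
        ^ (p - 1)
      ≤ C * (volume {y : Euc n | ρ (c - y) < r}) ^ p

/-! With `g s = exp(sP) x`, the derivative of `‖g s‖²` is `2⟪g s, P (g s)⟫ ≥ 2‖g s‖² > 0`, since
`exp(sP)` is invertible; so `s ↦ ‖g s‖` is strictly increasing, and `A_t x = g (log t)`. -/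

section MatrixExponential

-- Any normed-algebra structure on matrices will do: it is needed only to differentiate `exp`.
attribute [local instance] Matrix.linftyOpNormedRing Matrix.linftyOpNormedAlgebra

variable {P : Matrix (Fin n) (Fin n) ℝ}

lemma mulVecEuc_mul (A B : Matrix (Fin n) (Fin n) ℝ) (x : Euc n) :
    mulVecEuc (A * B) x = mulVecEuc A (mulVecEuc B x) := by
  simp only [mulVecEuc, ← Matrix.mulVec_mulVec, ContinuousLinearEquiv.apply_symm_apply]

lemma mulVecEuc_injective {M : Matrix (Fin n) (Fin n) ℝ} (hM : IsUnit M) :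
    Function.Injective (mulVecEuc M) :=
  (EuclideanSpace.equiv (Fin n) ℝ).symm.injective.comp <|
    (Matrix.mulVec_injective_iff_isUnit.2 hM).comp (EuclideanSpace.equiv (Fin n) ℝ).injective

def mulVecEucCLM (x : Euc n) : Matrix (Fin n) (Fin n) ℝ →L[ℝ] Euc n :=
  LinearMap.toContinuousLinearMap (LinearMap.applyₗ x ∘ₗ Matrix.toEuclideanLin.toLinearMap)

lemma hasDerivAt_mulVecEuc_exp_smul (P : Matrix (Fin n) (Fin n) ℝ) (x : Euc n) (s : ℝ) :
    HasDerivAt (fun s : ℝ => mulVecEuc (NormedSpace.exp (s • P)) x)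
      (mulVecEuc P (mulVecEuc (NormedSpace.exp (s • P)) x)) s := by
  rw [← mulVecEuc_mul]
  exact (mulVecEucCLM x).hasFDerivAt.comp_hasDerivAt s (hasDerivAt_exp_smul_const' P s)

theorem strictMono_norm_mulVecEuc_exp_smul (hP : GoodMatrix P) {x : Euc n} (hx : x ≠ 0) :
    StrictMono fun s : ℝ => ‖mulVecEuc (NormedSpace.exp (s • P)) x‖ := by
  set g : ℝ → Euc n := fun s => mulVecEuc (NormedSpace.exp (s • P)) x
  suffices StrictMono fun s => ‖g s‖ ^ 2 from
    fun a b hab => lt_of_pow_lt_pow_left₀ 2 (norm_nonneg _) (this hab)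
  refine strictMono_of_hasDerivAt_pos (fun s => (hasDerivAt_mulVecEuc_exp_smul P x s).norm_sq)
    fun s => ?_
  have hg : g s ≠ 0 := fun h =>
    hx (mulVecEuc_injective (Matrix.isUnit_exp _) (h.trans (by simp [mulVecEuc])))
  calc (0 : ℝ) < 2 * ⟪g s, g s⟫ := by
        rw [real_inner_self_eq_norm_sq]; positivity
    _ ≤ 2 * ⟪g s, mulVecEuc P (g s)⟫ := by
        gcongr; exact (hP (g s)).trans_eq (real_inner_comm _ _)

end MatrixExponential

theorem statement0 (n : ℕ) (P : Matrix (Fin n) (Fin n) ℝ) (hP : GoodMatrix P)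
    (x : Euc n) (hx : x ≠ 0) :
    StrictMonoOn (fun t : ℝ => ‖Aact P t x‖) (Set.Ioi 0) :=
  (strictMono_norm_mulVecEuc_exp_smul hP hx).comp_strictMonoOn Real.strictMonoOn_log
end
end

section
/- The norm function ρ associated with the dilations A_t = t^P satisfies the triangle inequality ρ(x+y) ≤ ρ(x) + ρ(y) for all x, y ∈ ℝⁿ. -/
open MeasureTheory Real Set Matrix
open scoped FourierTransform ENNReal NNReal RealInnerProductSpace

noncomputable section

variable {n : ℕ}

/-!
Since `⟪Pv, v⟫ ≥ ‖v‖²`, the curve `w(s) = e^{-s} e^{sP} x` satisfies `w' = (P - 1) w`, so `‖w(s)‖²`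
is nondecreasing; hence `A_t = e^{(log t) P}` contracts by the factor `t` for `0 < t ≤ 1`. Together with
`A_{tu} = A_t A_u` this gives `ρ z ≤ r` as soon as `‖A_{r⁻¹} z‖ ≤ 1`. For `r = ρ x + ρ y` the
contraction gives `‖A_{r⁻¹} x‖ ≤ ρ x / r` and `‖A_{r⁻¹} y‖ ≤ ρ y / r`, and these add up to `1`.
-/

theorem Matrix.toEuclideanCLM_exp {𝕜 ι : Type*} [RCLike 𝕜] [Fintype ι] [DecidableEq ι]
    (M : Matrix ι ι 𝕜) :
    toEuclideanCLM (𝕜 := 𝕜) (NormedSpace.exp M) =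
      NormedSpace.exp (toEuclideanCLM (𝕜 := 𝕜) M) :=
  open scoped Norms.Operator in
  NormedSpace.map_exp (toEuclideanCLM (𝕜 := 𝕜) (n := ι)) (LinearMap.continuous_of_finiteDimensional
    (toEuclideanCLM (𝕜 := 𝕜) (n := ι)).toAlgEquiv.toLinearMap) M

theorem norm_exp_smul_apply_le_of_nonpos {E : Type*} [NormedAddCommGroup E]
    [InnerProductSpace ℝ E] [CompleteSpace E] (L : E →L[ℝ] E) (hL : ∀ v, ‖v‖ ^ 2 ≤ ⟪L v, v⟫)
    (x : E) {s : ℝ} (hs : s ≤ 0) : ‖NormedSpace.exp (s • L) x‖ ≤ Real.exp s * ‖x‖ := by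
  set w : ℝ → E := fun s => Real.exp (-s) • NormedSpace.exp (s • L) x with hw
  have hw_deriv : ∀ s, HasDerivAt w (L (w s) - w s) s := by
    intro s
    have hu : HasDerivAt (fun s : ℝ => NormedSpace.exp (s • L) x)
        (L (NormedSpace.exp (s • L) x)) s := by
      simpa using (hasDerivAt_exp_smul_const' (𝕂 := ℝ) L s).clm_apply (hasDerivAt_const s x)
    refine ((hasDerivAt_neg s).exp.smul hu).congr_deriv ?_
    simp only [hw, map_smul]
    module
  have hw_mono : MonotoneOn (fun s => ‖w s‖ ^ 2) (Set.Iic 0) := by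
    refine monotoneOn_of_hasDerivWithinAt_nonneg (convex_Iic 0)
      (fun t _ => (hw_deriv t).norm_sq.continuousAt.continuousWithinAt)
      (fun t _ => (hw_deriv t).norm_sq.hasDerivWithinAt) fun t _ => ?_
    rw [inner_sub_right, real_inner_self_eq_norm_sq, real_inner_comm]
    linarith [hL (w t)]
  have hw_zero : w 0 = x := by simp [hw]
  have hw_le : ‖w s‖ ≤ ‖x‖ := by
    rw [← hw_zero]
    exact (pow_le_pow_iff_left₀ (norm_nonneg _) (norm_nonneg _) two_ne_zero).mp
      (hw_mono hs Set.self_mem_Iic hs)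
  rw [hw, norm_smul, Real.norm_of_nonneg (Real.exp_pos _).le, Real.exp_neg] at hw_le
  rwa [inv_mul_le_iff₀ (Real.exp_pos s)] at hw_le

section Dilation

variable (P : Matrix (Fin n) (Fin n) ℝ)

theorem Aact_eq_exp_apply (t : ℝ) (x : Euc n) :
    Aact P t x = NormedSpace.exp (Real.log t • toEuclideanCLM (𝕜 := ℝ) P) x := by
  rw [← map_smul, ← Matrix.toEuclideanCLM_exp]
  rfl

theorem Aact_add (t : ℝ) (x y : Euc n) : Aact P t (x + y) = Aact P t x + Aact P t y := by
  simp only [Aact_eq_exp_apply, map_add]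

theorem Aact_mul {t u : ℝ} (ht : 0 < t) (hu : 0 < u) (x : Euc n) :
    Aact P (t * u) x = Aact P t (Aact P u x) := by
  have hcomm := ((Commute.refl P).smul_left (Real.log t)).smul_right (Real.log u)
  simp only [Aact, mulVecEuc, Real.log_mul ht.ne' hu.ne', add_smul,
    Matrix.exp_add_of_commute _ _ hcomm, ContinuousLinearEquiv.apply_symm_apply,
    Matrix.mulVec_mulVec]

variable {P}

theorem norm_Aact_le (hP : GoodMatrix P) {t : ℝ} (ht₀ : 0 < t) (ht₁ : t ≤ 1) (x : Euc n) :
    ‖Aact P t x‖ ≤ t * ‖x‖ := by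
  have hL (v : Euc n) : ‖v‖ ^ 2 ≤ ⟪toEuclideanCLM (𝕜 := ℝ) P v, v⟫ :=
    real_inner_self_eq_norm_sq v ▸ hP v
  simpa only [Aact_eq_exp_apply, Real.exp_log ht₀] using
    norm_exp_smul_apply_le_of_nonpos _ hL x (Real.log_nonpos ht₀.le ht₁)

theorem norm_Aact_inv_le (hP : GoodMatrix P) {c r : ℝ} (hc : 0 < c) (hcr : c ≤ r) (z : Euc n) :
    ‖Aact P r⁻¹ z‖ ≤ c / r * ‖Aact P c⁻¹ z‖ := by
  have hr : 0 < r := hc.trans_le hcr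
  rw [show r⁻¹ = c / r * c⁻¹ by field_simp, Aact_mul P (by positivity) (by positivity)]
  exact norm_Aact_le hP (by positivity) ((div_le_one hr).mpr hcr) _

theorem IsRho.le_of_norm_Aact_inv_le_one (hP : GoodMatrix P) {ρ : Euc n → ℝ} (hρ : IsRho P ρ)
    {r : ℝ} (hr : 0 < r) {z : Euc n} (hz : ‖Aact P r⁻¹ z‖ ≤ 1) : ρ z ≤ r := by
  rcases eq_or_ne z 0 with rfl | hz₀
  · exact hρ.1 ▸ hr.le
  obtain ⟨hρz, hρz_norm⟩ := hρ.2 z hz₀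
  by_contra! hlt
  have : 1 ≤ r / ρ z := by
    simpa [hρz_norm] using
      (norm_Aact_inv_le hP hr hlt.le z).trans (mul_le_of_le_one_right (by positivity) hz)
  linarith [(div_lt_one hρz).mpr hlt]

end Dilation

theorem statement4 (n : ℕ) (P : Matrix (Fin n) (Fin n) ℝ) (hP : GoodMatrix P)
    (ρ : Euc n → ℝ) (hρ : IsRho P ρ) :
    ∀ x y : Euc n, ρ (x + y) ≤ ρ x + ρ y := by
  intro x y
  rcases eq_or_ne x 0 with rfl | hx
  · simp [hρ.1]
  rcases eq_or_ne y 0 with rfl | hy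
  · simp [hρ.1]
  obtain ⟨hρx, hρx_norm⟩ := hρ.2 x hx
  obtain ⟨hρy, hρy_norm⟩ := hρ.2 y hy
  have hsum : 0 < ρ x + ρ y := add_pos hρx hρy
  refine hρ.le_of_norm_Aact_inv_le_one hP hsum ?_
  calc ‖Aact P (ρ x + ρ y)⁻¹ (x + y)‖
      ≤ ‖Aact P (ρ x + ρ y)⁻¹ x‖ + ‖Aact P (ρ x + ρ y)⁻¹ y‖ := by
        rw [Aact_add]
        exact norm_add_le _ _
    _ ≤ ρ x / (ρ x + ρ y) * 1 + ρ y / (ρ x + ρ y) * 1 :=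
        add_le_add (hρx_norm ▸ norm_Aact_inv_le hP hρx (by linarith) x)
          (hρy_norm ▸ norm_Aact_inv_le hP hρy (by linarith) y)
    _ = 1 := by field_simp
end
end
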